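/- Let Σ̃ be the disjoint union of five copies Σ^c_c, Σ^c_r, Σ^r_c, Σ^r_r, Σ^int_int of the alphabet Σ, and let W, H be the nonterminals of the multiple context-free grammar with rules W ::= ε | i | w1 w2 | x w y and H ::= (ε,ε) | (x1 x2, y2 y1) | (w1 x w1', w2 y w2') | (a x b, c y d), where i ∈ Σ^int_int, the w's are generated by W, the pairs by H, and (a,b,c,d) ∈ Σ^c_c × Σ^r_c × Σ^c_r × Σ^r_r. Then the language generated by W is exactly the set of words ω̃ ∈ Σ̃* that are the typed encodings of 2-wave words over Σ, i.e. L(W) = { ω̃ : ω ∈ WW2(Σ) }. -/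

import Mathlib

/-!
Soundness: the pairs `(x, y)` generated by `H` are the encodings `x ++ y` of 2-wave words cut
after `x` at a position that no `M1`-arc crosses. Every rule of the grammar then becomes one of
two constructions on 2-wave words: inserting one word into another at such a cut, or placing a
new wave `(1, p + 2, p + 3, n + 4)` around a word cut at `p`.

Completeness, by strong induction on the length `n`. Each `M1`-arc lies under the outer
`M2`-arc of its wave, so an `M2`-cut at some `0 < q < n` is a cut of both matchings and splits
the word into two shorter 2-wave words. Otherwise, for `n ≥ 2`, position `1` opens a wave
`(1, i₂, i₃, n)` whose outer arc spans the whole word; the positions under its two `M1`-arcs and those under its inner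
`M2`-arc are closed under all arcs and carry shorter 2-wave words, which the wave rule of `H` and
the rule `W ::= x w y` reassemble.
-/

/-- A matching relation of length `n`, on positions `1, …, n`. -/
structure Matching (n : ℕ) where
  rel : ℕ → ℕ → Prop
  ordered : ∀ i j, rel i j → 1 ≤ i ∧ i < j ∧ j ≤ n
  unique : ∀ i j k l, rel i j → rel k l →
    (i = k ∨ i = l ∨ j = k ∨ j = l) → i = k ∧ j = l
  noncrossing : ∀ i j k l, rel i j → rel k l → i < k → k < j → l < j

/-- A 2-nested word: a word together with two matchings of its length. -/
structure TwoNW (α : Type) where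
  word : List α
  M1 : Matching word.length
  M2 : Matching word.length

def Matching.IsCall {n : ℕ} (M : Matching n) (i : ℕ) : Prop := ∃ j, M.rel i j
def Matching.IsRet {n : ℕ} (M : Matching n) (i : ℕ) : Prop := ∃ j, M.rel j i
def Matching.IsInt {n : ℕ} (M : Matching n) (i : ℕ) : Prop := ¬ M.IsCall i ∧ ¬ M.IsRet i

/-- `(i1,i2,i3,i4)` is a 2-wave of the pair of matchings `(M1, M2)`. -/
def IsTwoWaveQuad {n : ℕ} (M1 M2 : Matching n) (i1 i2 i3 i4 : ℕ) : Prop :=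
  i1 < i2 ∧ i2 < i3 ∧ i3 < i4 ∧
  M1.rel i1 i2 ∧ M1.rel i3 i4 ∧ M2.rel i2 i3 ∧ M2.rel i1 i4

/-- A 2-wave structure: every arch of `M1 ∪ M2` is an arch of some 2-wave. -/
def IsWaveStructure {n : ℕ} (M1 M2 : Matching n) : Prop :=
  (∀ i j, M1.rel i j → ∃ i1 i2 i3 i4, IsTwoWaveQuad M1 M2 i1 i2 i3 i4 ∧
      ((i = i1 ∧ j = i2) ∨ (i = i3 ∧ j = i4))) ∧
  (∀ i j, M2.rel i j → ∃ i1 i2 i3 i4, IsTwoWaveQuad M1 M2 i1 i2 i3 i4 ∧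
      ((i = i2 ∧ j = i3) ∨ (i = i1 ∧ j = i4)))

/-- A 2-wave word. -/
def TwoNW.IsWaveWord {α : Type} (ω : TwoNW α) : Prop := IsWaveStructure ω.M1 ω.M2

/-- The typed alphabet `Σ̃`: five copies of `Σ`, recording the call/return/
internal status w.r.t. `M1` (upper index) and `M2` (lower index). -/
inductive Typed (α : Type) : Type
  | cc : α → Typed α  -- Σ^c_c
  | cr : α → Typed α  -- Σ^c_r
  | rc : α → Typed α  -- Σ^r_c
  | rr : α → Typed α  -- Σ^r_r
  | ii : α → Typed α  -- Σ^int_int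

mutual
  /-- Words generated by the non-terminal `W` of the MCFG
  `W ::= ε | i | w1 w2 | x w y`. -/
  inductive GenW (α : Type) : List (Typed α) → Prop
    | nil : GenW α []
    | intl (a : α) : GenW α [Typed.ii a]
    | concat {w1 w2 : List (Typed α)} : GenW α w1 → GenW α w2 → GenW α (w1 ++ w2)
    | wrap {x w y : List (Typed α)} : GenH α x y → GenW α w → GenW α (x ++ w ++ y)
  /-- Pairs of words generated by the non-terminal `H` of the MCFG
  `H ::= (ε,ε) | (x1 x2, y2 y1) | (w1 x w1', w2 y w2') | (a x b, c y d)`. -/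
  inductive GenH (α : Type) : List (Typed α) → List (Typed α) → Prop
    | nil : GenH α [] []
    | comp {x1 y1 x2 y2 : List (Typed α)} :
        GenH α x1 y1 → GenH α x2 y2 → GenH α (x1 ++ x2) (y2 ++ y1)
    | sandwich {x y w1 w1' w2 w2' : List (Typed α)} :
        GenW α w1 → GenW α w1' → GenW α w2 → GenW α w2' → GenH α x y →
        GenH α (w1 ++ x ++ w1') (w2 ++ y ++ w2')
    | wave {x y : List (Typed α)} (a b c d : α) : GenH α x y →
        GenH α (Typed.cc a :: (x ++ [Typed.rc b])) (Typed.cr c :: (y ++ [Typed.rr d]))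
end

open Classical in
/-- The typed (visibly pushdown) encoding `ω̃ ∈ Σ̃*` of a 2-nested word. -/
noncomputable def TwoNW.encode {α : Type} (ω : TwoNW α) : List (Typed α) :=
  List.ofFn fun k : Fin ω.word.length =>
    if ω.M1.IsCall ((k : ℕ) + 1) then
      (if ω.M2.IsCall ((k : ℕ) + 1) then Typed.cc (ω.word.get k)
       else Typed.cr (ω.word.get k))
    else if ω.M1.IsRet ((k : ℕ) + 1) then
      (if ω.M2.IsCall ((k : ℕ) + 1) then Typed.rc (ω.word.get k)
       else Typed.rr (ω.word.get k))
    else Typed.ii (ω.word.get k)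

def Laminar (a b c d : ℕ) : Prop := b < c ∨ d < a ∨ (a < c ∧ d < b) ∨ (c < a ∧ b < d)

lemma Laminar.symm {a b c d : ℕ} (h : Laminar a b c d) : Laminar c d a b := by
  unfold Laminar at *; omega

lemma StrictMono.laminar_iff {g : ℕ → ℕ} (hg : StrictMono g) {a b c d : ℕ} :
    Laminar (g a) (g b) (g c) (g d) ↔ Laminar a b c d := by
  simp only [Laminar, hg.lt_iff_lt]

namespace Matching

variable {n : ℕ}

lemma eq_or_laminar (M : Matching n) {a b c d : ℕ} (h : M.rel a b) (h' : M.rel c d) :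
    (a = c ∧ b = d) ∨ Laminar a b c d := by
  have hab := M.ordered a b h
  have hcd := M.ordered c d h'
  have hu := M.unique a b c d h h'
  have hx := M.noncrossing a b c d h h'
  have hx' := M.noncrossing c d a b h' h
  unfold Laminar
  omega

def ofLaminar (n : ℕ) (r : ℕ → ℕ → Prop) (ordered : ∀ i j, r i j → 1 ≤ i ∧ i < j ∧ j ≤ n)
    (laminar : ∀ a b c d, r a b → r c d → (a = c ∧ b = d) ∨ Laminar a b c d) : Matching n where
  rel := r
  ordered := ordered
  unique a b c d h h' := by
    have := laminar a b c d h h'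
    have := ordered a b h
    have := ordered c d h'
    unfold Laminar at *
    omega
  noncrossing a b c d h h' := by
    have := laminar a b c d h h'
    unfold Laminar at *
    omega

def empty (n : ℕ) : Matching n := ofLaminar n (fun _ _ => False) (fun _ _ h => h.elim)
  (fun _ _ _ _ h => h.elim)

lemma not_isCall_of_rel (M : Matching n) {a b : ℕ} (h : M.rel a b) : ¬ M.IsCall b := by
  rintro ⟨c, h'⟩
  have := M.unique a b b c h h' (by omega)
  have := M.ordered a b h
  omega

/-- No arc of `M` crosses the cut between positions `p` and `p + 1`. -/
def IsCut (M : Matching n) (p : ℕ) : Prop := ∀ i j, M.rel i j → j ≤ p ∨ p < i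

lemma isCut_of_length_le (M : Matching n) {p : ℕ} (hp : n ≤ p) : M.IsCut p := by
  intro i j h
  have := M.ordered i j h
  omega

lemma isCut_zero (M : Matching n) : M.IsCut 0 := by
  intro i j h
  have := M.ordered i j h
  omega

lemma isCut_one_of_not_isCall (M : Matching n) (h : ¬ M.IsCall 1) : M.IsCut 1 := by
  intro i j hij
  have := M.ordered i j hij
  rcases Nat.lt_or_ge 1 i with hi | hi
  · exact Or.inr hi
  · obtain rfl : i = 1 := by omega
    exact absurd ⟨j, hij⟩ h

lemma isCut_of_rel_one (M : Matching n) {b : ℕ} (h : M.rel 1 b) : M.IsCut b := by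
  intro i j hij
  have hl := M.eq_or_laminar h hij
  have := M.ordered i j hij
  unfold Laminar at hl
  omega

end Matching

/-- Each `M1`-arc lies under the outer `M2`-arc of its wave. -/
lemma IsWaveStructure.isCut_fst {n : ℕ} {M1 M2 : Matching n} (h : IsWaveStructure M1 M2)
    {p : ℕ} (hp : M2.IsCut p) : M1.IsCut p := by
  intro i j hij
  obtain ⟨i1, i2, i3, i4, ⟨h12, h23, h34, -, -, -, h14⟩, hpos⟩ := h.1 i j hij
  have := hp i1 i4 h14
  omega

section Encoding

variable {α : Type} {n m : ℕ}

open Classical in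
noncomputable def typedLetter (M1 M2 : Matching n) (i : ℕ) (a : α) : Typed α :=
  if M1.IsCall i then (if M2.IsCall i then Typed.cc a else Typed.cr a)
  else if M1.IsRet i then (if M2.IsCall i then Typed.rc a else Typed.rr a)
  else Typed.ii a

lemma typedLetter_congr {M1 M2 : Matching n} {N1 N2 : Matching m} {i j : ℕ}
    (h1 : M1.IsCall i ↔ N1.IsCall j) (h2 : M1.IsRet i ↔ N1.IsRet j)
    (h3 : M2.IsCall i ↔ N2.IsCall j) (a : α) :
    typedLetter M1 M2 i a = typedLetter N1 N2 j a := by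
  unfold typedLetter
  rw [propext h1, propext h2, propext h3]

lemma typedLetter_of_not_isCall_of_not_isRet {M1 M2 : Matching n} {i : ℕ}
    (h1 : ¬ M1.IsCall i) (h2 : ¬ M1.IsRet i) (a : α) : typedLetter M1 M2 i a = Typed.ii a := by
  simp only [typedLetter, h1, h2, if_false]

lemma IsTwoWaveQuad.typedLetter {M1 M2 : Matching n} {i1 i2 i3 i4 : ℕ}
    (h : IsTwoWaveQuad M1 M2 i1 i2 i3 i4) (a b c d : α) :
    typedLetter M1 M2 i1 a = Typed.cc a ∧ typedLetter M1 M2 i2 b = Typed.rc b ∧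
      typedLetter M1 M2 i3 c = Typed.cr c ∧ typedLetter M1 M2 i4 d = Typed.rr d := by
  obtain ⟨-, -, -, h12, h34, h23, h14⟩ := h
  refine ⟨?_, ?_, ?_, ?_⟩ <;> unfold _root_.typedLetter
  · rw [if_pos ⟨_, h12⟩, if_pos ⟨_, h14⟩]
  · rw [if_neg (M1.not_isCall_of_rel h12), if_pos ⟨_, h12⟩, if_pos ⟨_, h23⟩]
  · rw [if_pos ⟨_, h34⟩, if_neg (M2.not_isCall_of_rel h23)]
  · rw [if_neg (M1.not_isCall_of_rel h34), if_pos ⟨_, h34⟩, if_neg (M2.not_isCall_of_rel h14)]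

namespace TwoNW

lemma encode_eq_ofFn (ω : TwoNW α) :
    ω.encode = List.ofFn fun k : Fin ω.word.length =>
      typedLetter ω.M1 ω.M2 ((k : ℕ) + 1) (ω.word.get k) := rfl

@[simp] lemma length_encode (ω : TwoNW α) : ω.encode.length = ω.word.length := by
  simp [encode_eq_ofFn]

lemma getElem?_encode (ω : TwoNW α) (k : ℕ) :
    ω.encode[k]? = ω.word[k]?.map (typedLetter ω.M1 ω.M2 (k + 1)) := by
  rw [encode_eq_ofFn, List.getElem?_ofFn]
  split_ifs with h
  · simp [List.getElem?_eq_getElem h]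
  · simp [List.getElem?_eq_none (not_lt.mp h)]

end TwoNW

end Encoding

/-- An interleaving of the positions `1, …, m` and `1, …, k` into `1, …, n`. -/
structure Layout (m k n : ℕ) where
  left : ℕ → ℕ
  right : ℕ → ℕ
  strictMono_left : StrictMono left
  strictMono_right : StrictMono right
  left_mem : ∀ i, 1 ≤ i → i ≤ m → 1 ≤ left i ∧ left i ≤ n
  right_mem : ∀ j, 1 ≤ j → j ≤ k → 1 ≤ right j ∧ right j ≤ n
  left_ne_right : ∀ i j, 1 ≤ i → i ≤ m → 1 ≤ j → j ≤ k → left i ≠ right j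
  cover : ∀ x, 1 ≤ x → x ≤ n →
    (∃ i, 1 ≤ i ∧ i ≤ m ∧ left i = x) ∨ ∃ j, 1 ≤ j ∧ j ≤ k ∧ right j = x

namespace Layout

variable {m k n : ℕ}

def Compatible (L : Layout m k n) (M : Matching m) (N : Matching k) : Prop :=
  ∀ a b c d, M.rel a b → N.rel c d → Laminar (L.left a) (L.left b) (L.right c) (L.right d)

/-- List indices are positions minus one. -/
def Merges (L : Layout m k n) {β : Type*} (l₁ l₂ l : List β) : Prop :=
  l.length = n ∧ (∀ i, 1 ≤ i → i ≤ m → l[L.left i - 1]? = l₁[i - 1]?) ∧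
    ∀ j, 1 ≤ j → j ≤ k → l[L.right j - 1]? = l₂[j - 1]?

lemma Merges.unique {L : Layout m k n} {β : Type*} {l₁ l₂ l l' : List β} (h : L.Merges l₁ l₂ l)
    (h' : L.Merges l₁ l₂ l') : l = l' := by
  refine List.ext_getElem? fun x => ?_
  by_cases hx : x < n
  · rcases L.cover (x + 1) (by omega) (by omega) with ⟨i, hi, hi', hx⟩ | ⟨j, hj, hj', hx⟩
    · have e := congrArg (· - 1) hx
      simp only [Nat.add_sub_cancel] at e
      rw [← e, h.2.1 i hi hi', h'.2.1 i hi hi']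
    · have e := congrArg (· - 1) hx
      simp only [Nat.add_sub_cancel] at e
      rw [← e, h.2.2 j hj hj', h'.2.2 j hj hj']
  · have := h.1
    have := h'.1
    rw [List.getElem?_eq_none (by omega), List.getElem?_eq_none (by omega)]

end Layout

namespace Matching

variable {m k n : ℕ}

def glue (M : Matching m) (N : Matching k) (L : Layout m k n) (h : L.Compatible M N) :
    Matching n :=
  ofLaminar n (fun i j => (∃ a b, M.rel a b ∧ L.left a = i ∧ L.left b = j) ∨
      ∃ a b, N.rel a b ∧ L.right a = i ∧ L.right b = j)
    (by
      rintro i j (⟨a, b, hab, rfl, rfl⟩ | ⟨a, b, hab, rfl, rfl⟩)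
      · have := M.ordered a b hab
        exact ⟨(L.left_mem a (by omega) (by omega)).1, L.strictMono_left (by omega),
          (L.left_mem b (by omega) (by omega)).2⟩
      · have := N.ordered a b hab
        exact ⟨(L.right_mem a (by omega) (by omega)).1, L.strictMono_right (by omega),
          (L.right_mem b (by omega) (by omega)).2⟩)
    (by
      rintro _ _ _ _ (⟨a, b, hab, rfl, rfl⟩ | ⟨a, b, hab, rfl, rfl⟩)
        (⟨c, d, hcd, rfl, rfl⟩ | ⟨c, d, hcd, rfl, rfl⟩)
      · rcases M.eq_or_laminar hab hcd with ⟨rfl, rfl⟩ | hl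
        · exact Or.inl ⟨rfl, rfl⟩
        · exact Or.inr ((L.strictMono_left.laminar_iff).2 hl)
      · exact Or.inr (h a b c d hab hcd)
      · exact Or.inr (h c d a b hcd hab).symm
      · rcases N.eq_or_laminar hab hcd with ⟨rfl, rfl⟩ | hl
        · exact Or.inl ⟨rfl, rfl⟩
        · exact Or.inr ((L.strictMono_right.laminar_iff).2 hl))

variable {M : Matching m} {N : Matching k} {L : Layout m k n} {h : L.Compatible M N} {i : ℕ}

lemma isCall_glue_left (hi : 1 ≤ i) (hi' : i ≤ m) :
    (M.glue N L h).IsCall (L.left i) ↔ M.IsCall i := by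
  constructor
  · rintro ⟨_, ⟨a, b, hab, ha, rfl⟩ | ⟨a, b, hab, ha, rfl⟩⟩
    · exact ⟨b, L.strictMono_left.injective ha ▸ hab⟩
    · have := N.ordered a b hab
      exact absurd ha.symm (L.left_ne_right i a hi hi' (by omega) (by omega))
  · rintro ⟨j, hij⟩
    exact ⟨_, Or.inl ⟨i, j, hij, rfl, rfl⟩⟩

lemma isRet_glue_left (hi : 1 ≤ i) (hi' : i ≤ m) :
    (M.glue N L h).IsRet (L.left i) ↔ M.IsRet i := by
  constructor
  · rintro ⟨_, ⟨a, b, hab, rfl, hb⟩ | ⟨a, b, hab, rfl, hb⟩⟩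
    · exact ⟨a, L.strictMono_left.injective hb ▸ hab⟩
    · have := N.ordered a b hab
      exact absurd hb.symm (L.left_ne_right i b hi hi' (by omega) (by omega))
  · rintro ⟨j, hij⟩
    exact ⟨_, Or.inl ⟨j, i, hij, rfl, rfl⟩⟩

lemma isCall_glue_right (hi : 1 ≤ i) (hi' : i ≤ k) :
    (M.glue N L h).IsCall (L.right i) ↔ N.IsCall i := by
  constructor
  · rintro ⟨_, ⟨a, b, hab, ha, rfl⟩ | ⟨a, b, hab, ha, rfl⟩⟩
    · have := M.ordered a b hab
      exact absurd ha (L.left_ne_right a i (by omega) (by omega) hi hi')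
    · exact ⟨b, L.strictMono_right.injective ha ▸ hab⟩
  · rintro ⟨j, hij⟩
    exact ⟨_, Or.inr ⟨i, j, hij, rfl, rfl⟩⟩

lemma isRet_glue_right (hi : 1 ≤ i) (hi' : i ≤ k) :
    (M.glue N L h).IsRet (L.right i) ↔ N.IsRet i := by
  constructor
  · rintro ⟨_, ⟨a, b, hab, rfl, hb⟩ | ⟨a, b, hab, rfl, hb⟩⟩
    · have := M.ordered a b hab
      exact absurd hb (L.left_ne_right b i (by omega) (by omega) hi hi')
    · exact ⟨a, L.strictMono_right.injective hb ▸ hab⟩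
  · rintro ⟨j, hij⟩
    exact ⟨_, Or.inr ⟨j, i, hij, rfl, rfl⟩⟩

lemma isCut_glue {c : ℕ} (hM : ∀ a b, M.rel a b → L.left b ≤ c ∨ c < L.left a)
    (hN : ∀ a b, N.rel a b → L.right b ≤ c ∨ c < L.right a) : (M.glue N L h).IsCut c := by
  rintro _ _ (⟨a, b, hab, rfl, rfl⟩ | ⟨a, b, hab, rfl, rfl⟩)
  exacts [hM a b hab, hN a b hab]

end Matching

section Transport

variable {m n : ℕ} {M1 M2 : Matching m} {N1 N2 : Matching n} {g : ℕ → ℕ}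

lemma IsTwoWaveQuad.map (hg : StrictMono g) (h1 : ∀ a b, M1.rel a b → N1.rel (g a) (g b))
    (h2 : ∀ a b, M2.rel a b → N2.rel (g a) (g b)) {i1 i2 i3 i4 : ℕ}
    (h : IsTwoWaveQuad M1 M2 i1 i2 i3 i4) : IsTwoWaveQuad N1 N2 (g i1) (g i2) (g i3) (g i4) := by
  obtain ⟨o1, o2, o3, a12, a34, a23, a14⟩ := h
  exact ⟨hg o1, hg o2, hg o3, h1 _ _ a12, h1 _ _ a34, h2 _ _ a23, h2 _ _ a14⟩

lemma IsWaveStructure.map (h : IsWaveStructure M1 M2) (hg : StrictMono g)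
    (h1 : ∀ a b, M1.rel a b → N1.rel (g a) (g b)) (h2 : ∀ a b, M2.rel a b → N2.rel (g a) (g b)) :
    (∀ i j, M1.rel i j → ∃ i1 i2 i3 i4, IsTwoWaveQuad N1 N2 i1 i2 i3 i4 ∧
      ((g i = i1 ∧ g j = i2) ∨ (g i = i3 ∧ g j = i4))) ∧
    (∀ i j, M2.rel i j → ∃ i1 i2 i3 i4, IsTwoWaveQuad N1 N2 i1 i2 i3 i4 ∧
      ((g i = i2 ∧ g j = i3) ∨ (g i = i1 ∧ g j = i4))) := by
  constructor <;> intro i j hij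
  · obtain ⟨i1, i2, i3, i4, hq, hpos⟩ := h.1 i j hij
    exact ⟨_, _, _, _, hq.map hg h1 h2, by rcases hpos with ⟨rfl, rfl⟩ | ⟨rfl, rfl⟩ <;> simp⟩
  · obtain ⟨i1, i2, i3, i4, hq, hpos⟩ := h.2 i j hij
    exact ⟨_, _, _, _, hq.map hg h1 h2, by rcases hpos with ⟨rfl, rfl⟩ | ⟨rfl, rfl⟩ <;> simp⟩

end Transport

namespace TwoNW

variable {α : Type}

def glue (S T : TwoNW α) (w : List α) (L : Layout S.word.length T.word.length w.length)
    (h1 : L.Compatible S.M1 T.M1) (h2 : L.Compatible S.M2 T.M2) : TwoNW α :=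
  ⟨w, S.M1.glue T.M1 L h1, S.M2.glue T.M2 L h2⟩

variable {S T : TwoNW α} {w : List α} {L : Layout S.word.length T.word.length w.length}
  {h1 : L.Compatible S.M1 T.M1} {h2 : L.Compatible S.M2 T.M2}

lemma isWaveWord_glue (hS : S.IsWaveWord) (hT : T.IsWaveWord) :
    (S.glue T w L h1 h2).IsWaveWord := by
  have hl := IsWaveStructure.map (N1 := (S.glue T w L h1 h2).M1)
    (N2 := (S.glue T w L h1 h2).M2) hS L.strictMono_left
    (fun a b h => Or.inl ⟨a, b, h, rfl, rfl⟩) (fun a b h => Or.inl ⟨a, b, h, rfl, rfl⟩)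
  have hr := IsWaveStructure.map (N1 := (S.glue T w L h1 h2).M1)
    (N2 := (S.glue T w L h1 h2).M2) hT L.strictMono_right
    (fun a b h => Or.inr ⟨a, b, h, rfl, rfl⟩) (fun a b h => Or.inr ⟨a, b, h, rfl, rfl⟩)
  constructor <;> rintro _ _ (⟨a, b, hab, rfl, rfl⟩ | ⟨a, b, hab, rfl, rfl⟩)
  exacts [hl.1 a b hab, hr.1 a b hab, hl.2 a b hab, hr.2 a b hab]

lemma typedLetter_glue_left {i : ℕ} (hi : 1 ≤ i) (hi' : i ≤ S.word.length) (a : α) :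
    typedLetter (S.glue T w L h1 h2).M1 (S.glue T w L h1 h2).M2 (L.left i) a =
      typedLetter S.M1 S.M2 i a :=
  typedLetter_congr (Matching.isCall_glue_left (h := h1) hi hi')
    (Matching.isRet_glue_left (h := h1) hi hi') (Matching.isCall_glue_left (h := h2) hi hi') a

lemma typedLetter_glue_right {j : ℕ} (hj : 1 ≤ j) (hj' : j ≤ T.word.length) (a : α) :
    typedLetter (S.glue T w L h1 h2).M1 (S.glue T w L h1 h2).M2 (L.right j) a =
      typedLetter T.M1 T.M2 j a :=
  typedLetter_congr (Matching.isCall_glue_right (h := h1) hj hj')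
    (Matching.isRet_glue_right (h := h1) hj hj') (Matching.isCall_glue_right (h := h2) hj hj') a

lemma encode_glue (hw : L.Merges S.word T.word w) :
    L.Merges S.encode T.encode (S.glue T w L h1 h2).encode := by
  refine ⟨length_encode _, fun i hi hi' => ?_, fun j hj hj' => ?_⟩
  · rw [getElem?_encode, getElem?_encode, Nat.sub_add_cancel (L.left_mem i hi hi').1,
      Nat.sub_add_cancel hi]
    change w[L.left i - 1]?.map _ = _
    rw [hw.2.1 i hi hi']
    congr 1
    funext a
    exact typedLetter_glue_left hi hi' a
  · rw [getElem?_encode, getElem?_encode, Nat.sub_add_cancel (L.right_mem j hj hj').1,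
      Nat.sub_add_cancel hj]
    change w[L.right j - 1]?.map _ = _
    rw [hw.2.2 j hj hj']
    congr 1
    funext a
    exact typedLetter_glue_right hj hj' a

end TwoNW

namespace Matching

variable {m n : ℕ} {g : ℕ → ℕ}

def comap (M : Matching n) (g : ℕ → ℕ) (hg : StrictMono g) (m : ℕ) : Matching m :=
  ofLaminar m (fun i j => 1 ≤ i ∧ j ≤ m ∧ M.rel (g i) (g j))
    (fun _ _ ⟨hi, hj, h⟩ => ⟨hi, hg.lt_iff_lt.1 (M.ordered _ _ h).2.1, hj⟩)
    (fun _ _ _ _ ⟨_, _, h⟩ ⟨_, _, h'⟩ => (M.eq_or_laminar h h').imp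
      (fun ⟨e1, e2⟩ => ⟨hg.injective e1, hg.injective e2⟩) hg.laminar_iff.1)

def Respects (M : Matching n) (s : Set ℕ) : Prop := ∀ a b, M.rel a b → (a ∈ s ↔ b ∈ s)

variable {M : Matching n} {hg : StrictMono g} {k : ℕ}

lemma isCall_comap (hM : M.Respects (g '' Set.Icc 1 m)) (hk : k ∈ Set.Icc 1 m) :
    (M.comap g hg m).IsCall k ↔ M.IsCall (g k) := by
  constructor
  · rintro ⟨j, -, -, h⟩
    exact ⟨_, h⟩
  · rintro ⟨y, h⟩
    obtain ⟨j, hj, rfl⟩ := (hM _ _ h).1 ⟨k, hk, rfl⟩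
    exact ⟨j, hk.1, hj.2, h⟩

lemma isRet_comap (hM : M.Respects (g '' Set.Icc 1 m)) (hk : k ∈ Set.Icc 1 m) :
    (M.comap g hg m).IsRet k ↔ M.IsRet (g k) := by
  constructor
  · rintro ⟨j, -, -, h⟩
    exact ⟨_, h⟩
  · rintro ⟨y, h⟩
    obtain ⟨j, hj, rfl⟩ := (hM _ _ h).2 ⟨k, hk, rfl⟩
    exact ⟨j, hj.1, hk.2, h⟩

lemma isCut_comap {x c : ℕ} (hM : M.IsCut x) (h1 : g c ≤ x) (h2 : x < g (c + 1)) :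
    (M.comap g hg m).IsCut c := by
  rintro i j ⟨-, -, h⟩
  rcases hM _ _ h with h' | h'
  · left
    by_contra hj
    have := hg.monotone (show c + 1 ≤ j by omega)
    omega
  · right
    by_contra hi
    have := hg.monotone (show i ≤ c by omega)
    omega

end Matching

lemma IsTwoWaveQuad.comap {m n : ℕ} {M1 M2 : Matching n} {g : ℕ → ℕ} (hg : StrictMono g)
    (h1 : M1.Respects (g '' Set.Icc 1 m)) (h2 : M2.Respects (g '' Set.Icc 1 m))
    {x1 x2 x3 x4 : ℕ} (hq : IsTwoWaveQuad M1 M2 x1 x2 x3 x4)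
    (hx : x1 ∈ g '' Set.Icc 1 m ∨ x2 ∈ g '' Set.Icc 1 m ∨ x3 ∈ g '' Set.Icc 1 m) :
    ∃ k1 k2 k3 k4, IsTwoWaveQuad (M1.comap g hg m) (M2.comap g hg m) k1 k2 k3 k4 ∧
      g k1 = x1 ∧ g k2 = x2 ∧ g k3 = x3 ∧ g k4 = x4 := by
  obtain ⟨o1, o2, o3, a12, a34, a23, a14⟩ := hq
  have e12 := h1 _ _ a12
  have e34 := h1 _ _ a34
  have e23 := h2 _ _ a23
  have e14 := h2 _ _ a14
  obtain ⟨⟨k1, hk1, rfl⟩, ⟨k2, hk2, rfl⟩, ⟨k3, hk3, rfl⟩, ⟨k4, hk4, rfl⟩⟩ :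
      x1 ∈ g '' Set.Icc 1 m ∧ x2 ∈ g '' Set.Icc 1 m ∧ x3 ∈ g '' Set.Icc 1 m ∧
        x4 ∈ g '' Set.Icc 1 m := by tauto
  exact ⟨k1, k2, k3, k4, ⟨hg.lt_iff_lt.1 o1, hg.lt_iff_lt.1 o2, hg.lt_iff_lt.1 o3,
    ⟨hk1.1, hk2.2, a12⟩, ⟨hk3.1, hk4.2, a34⟩, ⟨hk2.1, hk3.2, a23⟩, ⟨hk1.1, hk4.2, a14⟩⟩,
    rfl, rfl, rfl, rfl⟩

def Selects {β : Type*} (g : ℕ → ℕ) (m : ℕ) (l l' : List β) : Prop :=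
  l'.length = m ∧ ∀ k, 1 ≤ k → k ≤ m → l'[k - 1]? = l[g k - 1]?

lemma Selects.unique {β : Type*} {g : ℕ → ℕ} {m : ℕ} {l l' l'' : List β}
    (h : Selects g m l l') (h' : Selects g m l l'') : l' = l'' := by
  refine List.ext_getElem? fun k => ?_
  by_cases hk : k < m
  · simpa using (h.2 (k + 1) (by omega) (by omega)).trans (h'.2 (k + 1) (by omega) (by omega)).symm
  · have := h.1
    have := h'.1
    rw [List.getElem?_eq_none (by omega), List.getElem?_eq_none (by omega)]

namespace TwoNW

variable {α : Type}

def restrict (ω : TwoNW α) (g : ℕ → ℕ) (hg : StrictMono g) (w : List α) : TwoNW α :=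
  ⟨w, ω.M1.comap g hg w.length, ω.M2.comap g hg w.length⟩

variable {ω : TwoNW α} {g : ℕ → ℕ} {hg : StrictMono g} {w : List α}

lemma isWaveWord_restrict (hω : ω.IsWaveWord) (h1 : ω.M1.Respects (g '' Set.Icc 1 w.length))
    (h2 : ω.M2.Respects (g '' Set.Icc 1 w.length)) : (ω.restrict g hg w).IsWaveWord := by
  have hmem : ∀ {i j}, (ω.restrict g hg w).M1.rel i j ∨ (ω.restrict g hg w).M2.rel i j →
      g i ∈ g '' Set.Icc 1 w.length := by
    rintro i j (⟨hi, hj, h⟩ | ⟨hi, hj, h⟩)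
    · exact ⟨i, ⟨hi, by have := hg.lt_iff_lt.1 (ω.M1.ordered _ _ h).2.1; omega⟩, rfl⟩
    · exact ⟨i, ⟨hi, by have := hg.lt_iff_lt.1 (ω.M2.ordered _ _ h).2.1; omega⟩, rfl⟩
  constructor
  · intro i j hij
    obtain ⟨x1, x2, x3, x4, hq, hpos⟩ := hω.1 _ _ hij.2.2
    have hi := hmem (Or.inl hij)
    obtain ⟨k1, k2, k3, k4, hq', rfl, rfl, rfl, rfl⟩ :=
      hq.comap hg h1 h2 (by rcases hpos with ⟨e, -⟩ | ⟨e, -⟩ <;> rw [← e] <;> tauto)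
    exact ⟨k1, k2, k3, k4, hq', by simpa only [hg.injective.eq_iff] using hpos⟩
  · intro i j hij
    obtain ⟨x1, x2, x3, x4, hq, hpos⟩ := hω.2 _ _ hij.2.2
    have hi := hmem (Or.inr hij)
    obtain ⟨k1, k2, k3, k4, hq', rfl, rfl, rfl, rfl⟩ :=
      hq.comap hg h1 h2 (by rcases hpos with ⟨e, -⟩ | ⟨e, -⟩ <;> rw [← e] <;> tauto)
    exact ⟨k1, k2, k3, k4, hq', by simpa only [hg.injective.eq_iff] using hpos⟩

lemma encode_restrict (hw : Selects g w.length ω.word w)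
    (h1 : ω.M1.Respects (g '' Set.Icc 1 w.length)) (h2 : ω.M2.Respects (g '' Set.Icc 1 w.length)) :
    Selects g w.length ω.encode (ω.restrict g hg w).encode := by
  refine ⟨length_encode _, fun k hk hk' => ?_⟩
  have hgk : g 0 < g k := hg (by omega)
  rw [getElem?_encode, getElem?_encode, Nat.sub_add_cancel hk, Nat.sub_add_cancel (by omega)]
  change w[k - 1]?.map _ = _
  rw [hw.2 k hk hk']
  congr 1
  funext a
  exact typedLetter_congr (Matching.isCall_comap (hg := hg) h1 ⟨hk, hk'⟩)
    (Matching.isRet_comap (hg := hg) h1 ⟨hk, hk'⟩) (Matching.isCall_comap (hg := hg) h2 ⟨hk, hk'⟩) a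

end TwoNW

namespace Layout

variable {m k n : ℕ}

def insert (q : ℕ) (hq : q ≤ m) (hn : n = m + k) : Layout m k n where
  left i := if i ≤ q then i else i + k
  right j := j + q
  strictMono_left i j h := by dsimp only; split_ifs <;> omega
  strictMono_right i j h := by dsimp only; omega
  left_mem i h1 h2 := by split_ifs <;> omega
  right_mem j h1 h2 := by omega
  left_ne_right i j h1 h2 h3 h4 := by split_ifs <;> omega
  cover x h1 h2 := by
    by_cases hx : x ≤ q
    · exact Or.inl ⟨x, h1, by omega, if_pos hx⟩
    by_cases hx' : x ≤ q + k
    · exact Or.inr ⟨x - q, by omega, by omega, by omega⟩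
    · exact Or.inl ⟨x - k, by omega, by omega, by rw [if_neg (by omega)]; omega⟩

section Insert

variable {q : ℕ} {hq : q ≤ m} {hn : n = m + k}

lemma merges_insert {β : Type*} {l₁ l₂ : List β} (h₁ : l₁.length = m) (h₂ : l₂.length = k) :
    (insert q hq hn).Merges l₁ l₂ (l₁.take q ++ l₂ ++ l₁.drop q) := by
  refine ⟨by simp; omega, fun i hi hi' => ?_, fun j hj hj' => ?_⟩ <;>
    simp only [insert, List.getElem?_append, List.getElem?_take, List.getElem?_drop,
      List.length_append, List.length_take, h₁, h₂] <;>
    split_ifs <;> first | rfl | omega | (congr 1; omega)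

lemma compatible_insert (M : Matching m) (N : Matching k) : (insert q hq hn).Compatible M N := by
  intro a b c d hab hcd
  have := M.ordered a b hab
  have := N.ordered c d hcd
  simp only [insert, Laminar]
  split_ifs <;> omega

end Insert

def wave {n : ℕ} (p : ℕ) (hp : p ≤ m) (hn : n = m + 4) : Layout m 4 n where
  left i := if i ≤ p then i + 1 else i + 3
  right j := if j ≤ 1 then j else if j = 2 then p + 2 else if j = 3 then p + 3 else m + j
  strictMono_left i j h := by dsimp only; split_ifs <;> omega
  strictMono_right i j h := by dsimp only; split_ifs <;> omega
  left_mem i h1 h2 := by split_ifs <;> omega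
  right_mem j h1 h2 := by split_ifs <;> omega
  left_ne_right i j h1 h2 h3 h4 := by split_ifs <;> omega
  cover x h1 h2 := by
    by_cases ha : x = 1
    · exact Or.inr ⟨1, le_rfl, by omega, by simp [ha]⟩
    by_cases hx : x ≤ p + 1
    · exact Or.inl ⟨x - 1, by omega, by omega, by rw [if_pos (by omega)]; omega⟩
    by_cases hb : x = p + 2
    · exact Or.inr ⟨2, by omega, by omega, by simp [hb]⟩
    by_cases hc : x = p + 3
    · exact Or.inr ⟨3, by omega, by omega, by simp [hc]⟩
    by_cases hd : x = m + 4
    · exact Or.inr ⟨4, by omega, le_rfl, by simp [hd]⟩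
    · exact Or.inl ⟨x - 3, by omega, by omega, by rw [if_neg (by omega)]; omega⟩

section Wave

variable {n p : ℕ} {hp : p ≤ m} {hn : n = m + 4}

lemma merges_wave {β : Type*} {l : List β} (h : l.length = m) (a b c d : β) :
    (wave p hp hn).Merges l [a, b, c, d] (a :: (l.take p ++ [b]) ++ c :: (l.drop p ++ [d])) := by
  refine ⟨by simp; omega, fun i hi hi' => ?_, fun j hj hj' => ?_⟩
  · simp only [wave, List.getElem?_append, List.getElem?_cons, List.getElem?_take,
      List.getElem?_drop, List.length_append, List.length_take, List.length_cons, List.length_nil,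
      List.length_drop, h, min_eq_left hp]
    split_ifs <;> first | omega | contradiction | rfl | (congr 1; omega)
  · rcases (by omega : j = 1 ∨ j = 2 ∨ j = 3 ∨ j = 4) with rfl | rfl | rfl | rfl <;>
      simp only [wave, List.getElem?_append, List.getElem?_cons, List.getElem?_take,
        List.getElem?_drop, List.length_append, List.length_take, List.length_cons,
        List.length_nil, List.length_drop, h, min_eq_left hp] <;>
      split_ifs <;> first | omega | contradiction | rfl

lemma compatible_wave_of_isCut {M : Matching m} {N : Matching 4} (hM : M.IsCut p)
    (hN : ∀ c d, N.rel c d → (c = 1 ∧ d = 2) ∨ (c = 3 ∧ d = 4)) :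
    (wave p hp hn).Compatible M N := by
  intro a b c d hab hcd
  have := M.ordered a b hab
  have := hM a b hab
  rcases hN c d hcd with ⟨rfl, rfl⟩ | ⟨rfl, rfl⟩ <;> simp only [wave, Laminar] <;>
    split_ifs <;> omega

lemma compatible_wave {M : Matching m} {N : Matching 4}
    (hN : ∀ c d, N.rel c d → (c = 2 ∧ d = 3) ∨ (c = 1 ∧ d = 4)) :
    (wave p hp hn).Compatible M N := by
  intro a b c d hab hcd
  have := M.ordered a b hab
  rcases hN c d hcd with ⟨rfl, rfl⟩ | ⟨rfl, rfl⟩ <;> simp only [wave, Laminar] <;>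
    split_ifs <;> omega

end Wave

end Layout

namespace TwoNW

variable {α : Type}

def empty : TwoNW α := ⟨[], Matching.empty 0, Matching.empty 0⟩

def single (a : α) : TwoNW α := ⟨[a], Matching.empty 1, Matching.empty 1⟩

def quad (a b c d : α) : TwoNW α :=
  ⟨[a, b, c, d],
    Matching.ofLaminar 4 (fun i j => (i = 1 ∧ j = 2) ∨ (i = 3 ∧ j = 4)) (fun _ _ _ => by omega)
      (fun _ _ _ _ _ _ => by unfold Laminar; omega),
    Matching.ofLaminar 4 (fun i j => (i = 2 ∧ j = 3) ∨ (i = 1 ∧ j = 4)) (fun _ _ _ => by omega)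
      (fun _ _ _ _ _ _ => by unfold Laminar; omega)⟩

lemma isWaveWord_of_forall_not_rel (ω : TwoNW α) (h1 : ∀ i j, ¬ ω.M1.rel i j)
    (h2 : ∀ i j, ¬ ω.M2.rel i j) : ω.IsWaveWord :=
  ⟨fun i j h => (h1 i j h).elim, fun i j h => (h2 i j h).elim⟩

lemma encode_eq_map_ii (ω : TwoNW α) (h : ∀ i j, ¬ ω.M1.rel i j) :
    ω.encode = ω.word.map Typed.ii := by
  refine List.ext_getElem? fun k => ?_
  rw [getElem?_encode, List.getElem?_map]
  congr 1
  funext a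
  exact typedLetter_of_not_isCall_of_not_isRet (fun ⟨_, hj⟩ => h _ _ hj) (fun ⟨_, hj⟩ => h _ _ hj) a

lemma isTwoWaveQuad_quad (a b c d : α) :
    IsTwoWaveQuad (quad a b c d).M1 (quad a b c d).M2 1 2 3 4 :=
  ⟨by omega, by omega, by omega, Or.inl ⟨rfl, rfl⟩, Or.inr ⟨rfl, rfl⟩, Or.inl ⟨rfl, rfl⟩,
    Or.inr ⟨rfl, rfl⟩⟩

lemma isWaveWord_quad (a b c d : α) : (quad a b c d).IsWaveWord := by
  refine ⟨fun i j h => ⟨1, 2, 3, 4, isTwoWaveQuad_quad a b c d, ?_⟩,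
    fun i j h => ⟨1, 2, 3, 4, isTwoWaveQuad_quad a b c d, ?_⟩⟩ <;> exact h

lemma encode_quad (a b c d : α) :
    (quad a b c d).encode = [Typed.cc a, Typed.rc b, Typed.cr c, Typed.rr d] := by
  obtain ⟨h1, h2, h3, h4⟩ := (isTwoWaveQuad_quad a b c d).typedLetter a b c d
  rw [encode_eq_ofFn]
  simp [List.ofFn_succ, quad]
  exact ⟨h1, h2, h3, h4⟩

def insert (S T : TwoNW α) (q : ℕ) (hq : q ≤ S.word.length) : TwoNW α :=
  S.glue T (S.word.take q ++ T.word ++ S.word.drop q) (Layout.insert q hq (by simp; omega))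
    (Layout.compatible_insert _ _) (Layout.compatible_insert _ _)

def wave (S : TwoNW α) (p : ℕ) (hp : p ≤ S.word.length) (hcut : S.M1.IsCut p) (a b c d : α) :
    TwoNW α :=
  S.glue (quad a b c d) (a :: (S.word.take p ++ [b]) ++ c :: (S.word.drop p ++ [d]))
    (Layout.wave p hp (by simp; omega)) (Layout.compatible_wave_of_isCut hcut fun _ _ h => h)
    (Layout.compatible_wave fun _ _ h => h)

variable {S T : TwoNW α}

lemma encode_insert {q : ℕ} {hq : q ≤ S.word.length} :
    (S.insert T q hq).encode = S.encode.take q ++ T.encode ++ S.encode.drop q :=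
  (encode_glue (Layout.merges_insert rfl rfl)).unique
    (Layout.merges_insert (length_encode S) (length_encode T))

lemma isCut_insert {q t : ℕ} {hq : q ≤ S.word.length} (hS : S.M1.IsCut q) (hT : T.M1.IsCut t)
    (ht : t ≤ T.word.length) :
    (S.insert T q hq).M1.IsCut (q + t) := by
  refine Matching.isCut_glue (h := Layout.compatible_insert _ _) (fun a b hab => ?_)
    (fun a b hab => ?_)
  · have := hS a b hab
    simp only [Layout.insert]
    split_ifs <;> omega
  · have := hT a b hab
    simp only [Layout.insert]
    omega

variable {p : ℕ} {hp : p ≤ S.word.length} {hcut : S.M1.IsCut p}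

lemma encode_wave (a b c d : α) :
    (S.wave p hp hcut a b c d).encode = Typed.cc a :: (S.encode.take p ++ [Typed.rc b]) ++
      Typed.cr c :: (S.encode.drop p ++ [Typed.rr d]) := by
  have h : (Layout.wave (n := (S.wave p hp hcut a b c d).word.length) p hp
      (by simp [wave, glue]; omega)).Merges S.encode (quad a b c d).encode
      (S.wave p hp hcut a b c d).encode := encode_glue (Layout.merges_wave rfl a b c d)
  rw [encode_quad] at h
  exact h.unique (Layout.merges_wave (length_encode S) _ _ _ _)

lemma isCut_wave (a b c d : α) : (S.wave p hp hcut a b c d).M1.IsCut (p + 2) := by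
  refine Matching.isCut_glue (h := Layout.compatible_wave_of_isCut hcut fun _ _ h => h)
    (fun a b hab => ?_) (fun a b hab => ?_)
  · have := hcut a b hab
    simp only [Layout.wave]
    split_ifs <;> omega
  · rcases hab with ⟨rfl, rfl⟩ | ⟨rfl, rfl⟩ <;> simp [Layout.wave]

end TwoNW

section Soundness

variable {α : Type}

def IsWaveEncoding (u : List (Typed α)) : Prop := ∃ ω : TwoNW α, ω.IsWaveWord ∧ ω.encode = u

/-- The semantics of the nonterminal `H`. -/
def IsWaveEncodingPair (x y : List (Typed α)) : Prop :=
  ∃ ω : TwoNW α, ω.IsWaveWord ∧ ω.M1.IsCut x.length ∧ ω.encode = x ++ y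

lemma IsWaveEncoding.nil : IsWaveEncoding ([] : List (Typed α)) :=
  ⟨TwoNW.empty, TwoNW.isWaveWord_of_forall_not_rel _ (fun _ _ h => h) (fun _ _ h => h), rfl⟩

lemma IsWaveEncoding.ii (a : α) : IsWaveEncoding [Typed.ii a] :=
  ⟨TwoNW.single a, TwoNW.isWaveWord_of_forall_not_rel _ (fun _ _ h => h) (fun _ _ h => h),
    TwoNW.encode_eq_map_ii _ fun _ _ h => h⟩

lemma IsWaveEncodingPair.nil : IsWaveEncodingPair ([] : List (Typed α)) [] :=
  let ⟨ω, hω, he⟩ := IsWaveEncoding.nil (α := α)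
  ⟨ω, hω, ω.M1.isCut_zero, he⟩

lemma IsWaveEncoding.pair_left {u : List (Typed α)} (h : IsWaveEncoding u) :
    IsWaveEncodingPair u [] := by
  obtain ⟨ω, hω, rfl⟩ := h
  exact ⟨ω, hω, ω.M1.isCut_of_length_le (by simp), by simp⟩

lemma IsWaveEncoding.pair_right {u : List (Typed α)} (h : IsWaveEncoding u) :
    IsWaveEncodingPair [] u := by
  obtain ⟨ω, hω, rfl⟩ := h
  exact ⟨ω, hω, ω.M1.isCut_zero, rfl⟩

lemma IsWaveEncodingPair.append {x y : List (Typed α)} (h : IsWaveEncodingPair x y) :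
    IsWaveEncoding (x ++ y) :=
  let ⟨ω, hω, _, he⟩ := h
  ⟨ω, hω, he⟩

lemma IsWaveEncodingPair.comp {x₁ y₁ x₂ y₂ : List (Typed α)} (h₁ : IsWaveEncodingPair x₁ y₁)
    (h₂ : IsWaveEncodingPair x₂ y₂) : IsWaveEncodingPair (x₁ ++ x₂) (y₂ ++ y₁) := by
  obtain ⟨S, hS, hcS, heS⟩ := h₁
  obtain ⟨T, hT, hcT, heT⟩ := h₂
  have hq : x₁.length ≤ S.word.length := by
    rw [← S.length_encode, heS, List.length_append]; omega
  have ht : x₂.length ≤ T.word.length := by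
    rw [← T.length_encode, heT, List.length_append]; omega
  refine ⟨S.insert T x₁.length hq, TwoNW.isWaveWord_glue hS hT, ?_, ?_⟩
  · rw [List.length_append]
    exact TwoNW.isCut_insert hcS hcT ht
  · simp [TwoNW.encode_insert, heS, heT]

lemma IsWaveEncodingPair.wave {x y : List (Typed α)} (h : IsWaveEncodingPair x y) (a b c d : α) :
    IsWaveEncodingPair (Typed.cc a :: (x ++ [Typed.rc b])) (Typed.cr c :: (y ++ [Typed.rr d])) := by
  obtain ⟨S, hS, hcut, he⟩ := h
  have hp : x.length ≤ S.word.length := by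
    rw [← S.length_encode, he, List.length_append]; omega
  refine ⟨S.wave x.length hp hcut a b c d, TwoNW.isWaveWord_glue hS (TwoNW.isWaveWord_quad a b c d),
    ?_, ?_⟩
  · simpa using TwoNW.isCut_wave (hp := hp) (hcut := hcut) a b c d
  · simp [TwoNW.encode_wave, he]

lemma isWaveEncoding_of_genW {u : List (Typed α)} (h : GenW α u) : IsWaveEncoding u := by
  refine GenW.rec (motive_1 := fun u _ => IsWaveEncoding u)
    (motive_2 := fun x y _ => IsWaveEncodingPair x y) ?_ ?_ ?_ ?_ ?_ ?_ ?_ ?_ h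
  · exact .nil
  · exact .ii
  · intro w₁ w₂ _ _ h₁ h₂
    simpa using (h₁.pair_left.comp h₂.pair_right).append
  · intro x w y _ _ hxy hw
    simpa using (hxy.comp hw.pair_left).append
  · exact .nil
  · intro x₁ y₁ x₂ y₂ _ _ h₁ h₂
    exact h₁.comp h₂
  · intro x y w₁ w₁' w₂ w₂' _ _ _ _ _ h₁ h₁' h₂ h₂' hxy
    simpa using ((h₁.pair_left.comp h₂'.pair_right).comp hxy).comp
      (h₁'.pair_left.comp h₂.pair_right)
  · intro x y a b c d _ hxy
    exact hxy.wave a b c d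

end Soundness

def blocks (a₁ l₁ a₂ k : ℕ) : ℕ := if k ≤ l₁ then a₁ + k else a₂ + (k - l₁)

def blockSet (a₁ l₁ a₂ l₂ : ℕ) : Set ℕ := Set.Ioc a₁ (a₁ + l₁) ∪ Set.Ioc a₂ (a₂ + l₂)

section Blocks

variable {a₁ l₁ a₂ l₂ : ℕ}

lemma strictMono_blocks (h : a₁ + l₁ ≤ a₂) : StrictMono (blocks a₁ l₁ a₂) := by
  intro i j hij
  unfold blocks
  split_ifs <;> omega

lemma image_blocks (h : a₁ + l₁ ≤ a₂) :
    blocks a₁ l₁ a₂ '' Set.Icc 1 (l₁ + l₂) = blockSet a₁ l₁ a₂ l₂ := by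
  ext x
  simp only [Set.mem_image, Set.mem_Icc, blockSet, Set.mem_union, Set.mem_Ioc, blocks]
  constructor
  · rintro ⟨k, hk, rfl⟩
    split_ifs <;> omega
  · rintro (hx | hx)
    · exact ⟨x - a₁, by omega, by rw [if_pos (by omega)]; omega⟩
    · exact ⟨l₁ + (x - a₂), by omega, by rw [if_neg (by omega)]; omega⟩

lemma selects_blocks {β : Type*} {l : List β} (h : a₁ + l₁ ≤ a₂) (hl : a₂ + l₂ ≤ l.length) :
    Selects (blocks a₁ l₁ a₂) (l₁ + l₂) l ((l.drop a₁).take l₁ ++ (l.drop a₂).take l₂) := by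
  refine ⟨by simp; omega, fun k hk hk' => ?_⟩
  simp only [blocks, List.getElem?_append, List.getElem?_take, List.getElem?_drop,
    List.length_take, List.length_drop]
  split_ifs <;> first | omega | (congr 1; omega)

lemma Matching.IsCut.respects_blockSet {n q : ℕ} {M : Matching n} (h : M.IsCut q) (hq : q ≤ n) :
    M.Respects (blockSet 0 q q 0) ∧ M.Respects (blockSet q (n - q) n 0) := by
  constructor <;> intro a b hab <;>
  · have := h a b hab
    have := M.ordered a b hab
    simp only [blockSet, Set.mem_union, Set.mem_Ioc]
    omega

end Blocks

namespace TwoNW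

variable {α : Type}

def restrictBlocks (ω : TwoNW α) (a₁ l₁ a₂ l₂ : ℕ) (h : a₁ + l₁ ≤ a₂) : TwoNW α :=
  ω.restrict (blocks a₁ l₁ a₂) (strictMono_blocks h)
    ((ω.word.drop a₁).take l₁ ++ (ω.word.drop a₂).take l₂)

variable {ω : TwoNW α} {a₁ l₁ a₂ l₂ : ℕ} {h : a₁ + l₁ ≤ a₂}

lemma length_restrictBlocks (hl : a₂ + l₂ ≤ ω.word.length) :
    (ω.restrictBlocks a₁ l₁ a₂ l₂ h).word.length = l₁ + l₂ :=
  (selects_blocks h hl).1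

lemma image_blocks_restrictBlocks (hl : a₂ + l₂ ≤ ω.word.length) :
    blocks a₁ l₁ a₂ '' Set.Icc 1 (ω.restrictBlocks a₁ l₁ a₂ l₂ h).word.length =
      blockSet a₁ l₁ a₂ l₂ := by
  rw [length_restrictBlocks hl, image_blocks h]

lemma isWaveWord_restrictBlocks (hω : ω.IsWaveWord) (hl : a₂ + l₂ ≤ ω.word.length)
    (h1 : ω.M1.Respects (blockSet a₁ l₁ a₂ l₂)) (h2 : ω.M2.Respects (blockSet a₁ l₁ a₂ l₂)) :
    (ω.restrictBlocks a₁ l₁ a₂ l₂ h).IsWaveWord :=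
  isWaveWord_restrict hω (image_blocks_restrictBlocks (h := h) hl ▸ h1)
    (image_blocks_restrictBlocks (h := h) hl ▸ h2)

lemma encode_restrictBlocks (hl : a₂ + l₂ ≤ ω.word.length)
    (h1 : ω.M1.Respects (blockSet a₁ l₁ a₂ l₂)) (h2 : ω.M2.Respects (blockSet a₁ l₁ a₂ l₂)) :
    (ω.restrictBlocks a₁ l₁ a₂ l₂ h).encode =
      (ω.encode.drop a₁).take l₁ ++ (ω.encode.drop a₂).take l₂ := by
  have hw := selects_blocks (l := ω.word) h hl
  have he := encode_restrict (hg := strictMono_blocks h) (hw.1 ▸ hw)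
    (image_blocks_restrictBlocks (h := h) hl ▸ h1) (image_blocks_restrictBlocks (h := h) hl ▸ h2)
  exact he.unique (hw.1 ▸ selects_blocks h (by simpa using hl))

lemma isCut_restrictBlocks {x c : ℕ} (hx : ω.M1.IsCut x) (h1 : blocks a₁ l₁ a₂ c ≤ x)
    (h2 : x < blocks a₁ l₁ a₂ (c + 1)) : (ω.restrictBlocks a₁ l₁ a₂ l₂ h).M1.IsCut c :=
  Matching.isCut_comap (hg := strictMono_blocks h) hx h1 h2

end TwoNW

namespace List

lemma drop_take_eq_cons_append {β : Type*} {l : List β} {i j : ℕ} {x y : β} (hij : i < j)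
    (hx : l[i]? = some x) (hy : l[j]? = some y) :
    (l.drop i).take (j + 1 - i) = x :: ((l.drop (i + 1)).take (j - i - 1) ++ [y]) := by
  have hj : j < l.length := (getElem?_eq_some_iff.1 hy).1
  refine ext_getElem? fun k => ?_
  rcases k with _ | k
  · rw [getElem?_take, if_pos (by omega), getElem?_drop, Nat.add_zero, hx]
    rfl
  · simp only [getElem?_take, getElem?_drop, getElem?_cons_succ,
      getElem?_append, length_take, length_drop, getElem?_singleton]
    split_ifs <;> first | omega | (congr 1; omega) | (rw [← hy]; congr 1; omega) | rfl

lemma drop_take_append_drop_of_le {β : Type*} (l : List β) {c L : ℕ} (h : c ≤ L) :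
    (l.take L).drop c ++ l.drop L = l.drop c := by
  obtain ⟨d, rfl⟩ := Nat.exists_eq_add_of_le h
  rw [drop_take, Nat.add_sub_cancel_left, drop_take_append_drop]

end List

section Generation

variable {α : Type} {u x y : List (Typed α)}

lemma GenW.genH_left (h : GenW α u) : GenH α u [] := by
  simpa using GenH.sandwich h .nil .nil .nil .nil

lemma GenW.genH_right (h : GenW α u) : GenH α [] u := by
  simpa using GenH.sandwich .nil .nil h .nil .nil

lemma GenH.genW (h : GenH α x y) : GenW α (x ++ y) := by
  simpa using GenW.wrap h .nil

lemma genW_map_ii (w : List α) : GenW α (w.map Typed.ii) := by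
  induction w with
  | nil => exact .nil
  | cons a w ih => exact GenW.concat (w1 := [Typed.ii a]) (.intl a) ih

lemma genH_take_drop_of_length_le_one (h : GenW α u) (hu : u.length ≤ 1) (p : ℕ) :
    GenH α (u.take p) (u.drop p) := by
  rcases Nat.eq_zero_or_pos p with rfl | hp
  · simpa using h.genH_right
  · rw [List.take_of_length_le (by omega), List.drop_of_length_le (by omega)]
    exact h.genH_left

end Generation

section Quad

variable {n i2 i3 : ℕ} {M1 M2 : Matching n}

lemma IsTwoWaveQuad.respects_fst (hq : IsTwoWaveQuad M1 M2 1 i2 i3 n) :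
    M1.Respects (blockSet 1 (i2 - 2) i3 (n - 1 - i3)) ∧
      M1.Respects (blockSet i2 (i3 - 1 - i2) (i3 - 1) 0) := by
  obtain ⟨-, -, -, h12, h34, -, -⟩ := hq
  constructor <;> intro k l h <;>
  · have := M1.ordered k l h
    have e1 := M1.eq_or_laminar h12 h
    have e2 := M1.eq_or_laminar h34 h
    simp only [blockSet, Set.mem_union, Set.mem_Ioc]
    unfold Laminar at e1 e2
    omega

lemma IsTwoWaveQuad.respects_snd (hq : IsTwoWaveQuad M1 M2 1 i2 i3 n) :
    M2.Respects (blockSet 1 (i2 - 2) i3 (n - 1 - i3)) ∧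
      M2.Respects (blockSet i2 (i3 - 1 - i2) (i3 - 1) 0) := by
  obtain ⟨o1, o2, o3, -, -, h23, h14⟩ := hq
  constructor <;> intro k l h <;>
  · have := M2.ordered k l h
    have e1 := M2.eq_or_laminar h23 h
    have e2 := M2.eq_or_laminar h14 h
    simp only [blockSet, Set.mem_union, Set.mem_Ioc]
    unfold Laminar at e1 e2
    omega

end Quad

namespace TwoNW

variable {α : Type} {ω : TwoNW α}

def GenHAtCuts (ω : TwoNW α) : Prop :=
  ∀ p, ω.M1.IsCut p → GenH α (ω.encode.take p) (ω.encode.drop p)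

lemma GenHAtCuts.genW (h : ω.GenHAtCuts) : GenW α ω.encode := by
  simpa using (h ω.word.length (ω.M1.isCut_of_length_le le_rfl)).genW

lemma genHAtCuts_of_length_le_one (h : ω.word.length ≤ 1) : ω.GenHAtCuts := by
  have hno : ∀ i j, ¬ ω.M1.rel i j := fun i j hij => by
    have := ω.M1.ordered i j hij
    omega
  intro p _
  rw [encode_eq_map_ii ω hno] at *
  exact genH_take_drop_of_length_le_one (genW_map_ii _) (by simpa using h) p

lemma getElem?_encode_of_getElem? {k : ℕ} {a : α} (h : ω.word[k]? = some a) :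
    ω.encode[k]? = some (typedLetter ω.M1 ω.M2 (k + 1) a) := by
  rw [getElem?_encode, h, Option.map_some]

lemma exists_isTwoWaveQuad_one (hω : ω.IsWaveWord) {j : ℕ} (h : ω.M2.rel 1 j) :
    ∃ i2 i3, IsTwoWaveQuad ω.M1 ω.M2 1 i2 i3 j := by
  obtain ⟨x1, x2, x3, x4, hq, hpos⟩ := hω.2 1 j h
  have := ω.M1.ordered x1 x2 hq.2.2.2.1
  rcases hpos with ⟨rfl, rfl⟩ | ⟨rfl, rfl⟩
  · omega
  · exact ⟨x2, x3, hq⟩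

section Step

variable (ih : ∀ ω' : TwoNW α, ω'.word.length < ω.word.length → ω'.IsWaveWord → ω'.GenHAtCuts)
include ih

lemma genHAtCuts_of_isCut_snd (hω : ω.IsWaveWord) {q : ℕ} (hq0 : 0 < q)
    (hqn : q < ω.word.length) (hq : ω.M2.IsCut q) : ω.GenHAtCuts := by
  set n := ω.word.length with hn
  have hq1 := hω.isCut_fst hq
  obtain ⟨hL1, hR1⟩ := hq1.respects_blockSet hqn.le
  obtain ⟨hL2, hR2⟩ := hq.respects_blockSet hqn.le
  set L := ω.restrictBlocks 0 q q 0 (by omega)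
  set R := ω.restrictBlocks q (n - q) n 0 (by omega)
  have hL : L.GenHAtCuts := ih L (by rw [length_restrictBlocks (by omega)]; omega)
    (isWaveWord_restrictBlocks hω (by omega) hL1 hL2)
  have hR : R.GenHAtCuts := ih R (by rw [length_restrictBlocks (by omega)]; omega)
    (isWaveWord_restrictBlocks hω (by omega) hR1 hR2)
  have eL : L.encode = ω.encode.take q := by
    rw [encode_restrictBlocks (by omega) hL1 hL2]
    simp
  have eR : R.encode = ω.encode.drop q := by
    rw [encode_restrictBlocks (by omega) hR1 hR2]
    simp only [List.take_zero, List.append_nil]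
    exact List.take_of_length_le (by rw [List.length_drop, length_encode])
  intro p hp
  rcases le_or_gt p q with hpq | hpq
  · have hLp := hL p (isCut_restrictBlocks hp (by unfold blocks; split_ifs <;> omega)
      (by unfold blocks; split_ifs <;> omega))
    have := hR.genW.genH_right.comp hLp
    rwa [eL, eR, List.take_take, min_eq_left hpq, List.nil_append, ← List.drop_append_of_le_length
      (by simp; omega), List.take_append_drop] at this
  · have hRp := hR (p - q) (isCut_restrictBlocks hp (by unfold blocks; split_ifs <;> omega)
      (by unfold blocks; split_ifs <;> omega))
    have := hL.genW.genH_left.comp hRp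
    rwa [eL, eR, List.append_nil, List.drop_drop, ← List.take_add,
      Nat.add_sub_cancel' hpq.le] at this

lemma genH_outer_of_isTwoWaveQuad (hω : ω.IsWaveWord) {i2 i3 : ℕ}
    (hq : IsTwoWaveQuad ω.M1 ω.M2 1 i2 i3 ω.word.length) :
    GenH α (ω.encode.take i2) (ω.encode.drop (i3 - 1)) := by
  set n := ω.word.length with hn
  have ⟨o1, o2, o3, h12, _, _, _⟩ := hq
  have hl : i3 + (n - 1 - i3) ≤ n := by omega
  have hI := ih (ω.restrictBlocks 1 (i2 - 2) i3 (n - 1 - i3) (by omega))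
    (by rw [length_restrictBlocks hl]; omega)
    (isWaveWord_restrictBlocks hω hl hq.respects_fst.1 hq.respects_snd.1) (i2 - 2)
    (isCut_restrictBlocks (ω.M1.isCut_of_rel_one h12) (by unfold blocks; split_ifs <;> omega)
      (by unfold blocks; split_ifs <;> omega))
  rw [encode_restrictBlocks hl hq.respects_fst.1 hq.respects_snd.1,
    List.take_left' (by simp; omega), List.drop_left' (by simp; omega)] at hI
  obtain ⟨a, ha⟩ : ∃ a, ω.word[0]? = some a := ⟨_, List.getElem?_eq_getElem (by omega)⟩
  obtain ⟨b, hb⟩ : ∃ b, ω.word[i2 - 1]? = some b := ⟨_, List.getElem?_eq_getElem (by omega)⟩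
  obtain ⟨c, hc⟩ : ∃ c, ω.word[i3 - 1]? = some c := ⟨_, List.getElem?_eq_getElem (by omega)⟩
  obtain ⟨d, hd⟩ : ∃ d, ω.word[n - 1]? = some d := ⟨_, List.getElem?_eq_getElem (by omega)⟩
  obtain ⟨ta, tb, tc, td⟩ := hq.typedLetter a b c d
  have hx := List.drop_take_eq_cons_append (by omega : 0 < i2 - 1)
    (getElem?_encode_of_getElem? ha) (getElem?_encode_of_getElem? hb)
  have hy := List.drop_take_eq_cons_append (by omega : i3 - 1 < n - 1)
    (getElem?_encode_of_getElem? hc) (getElem?_encode_of_getElem? hd)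
  rw [List.drop_zero, show i2 - 1 + 1 - 0 = i2 by omega, show i2 - 1 - 0 - 1 = i2 - 2 by omega,
    show i2 - 1 + 1 = i2 by omega, ta, tb] at hx
  rw [List.take_of_length_le (by simp; omega), show i3 - 1 + 1 = i3 by omega,
    show n - 1 - (i3 - 1) - 1 = n - 1 - i3 by omega, show n - 1 + 1 = n by omega, tc, td] at hy
  rw [hx, hy]
  exact GenH.wave a b c d hI

lemma genHAtCuts_of_isTwoWaveQuad (hω : ω.IsWaveWord) {i2 i3 : ℕ}
    (hq : IsTwoWaveQuad ω.M1 ω.M2 1 i2 i3 ω.word.length) : ω.GenHAtCuts := by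
  set n := ω.word.length with hn
  have ⟨o1, o2, o3, h12, h34, _, _⟩ := hq
  have hl : i3 - 1 + 0 ≤ n := by omega
  set M := ω.restrictBlocks i2 (i3 - 1 - i2) (i3 - 1) 0 (by omega)
  have hM : M.GenHAtCuts := ih M (by rw [length_restrictBlocks hl]; omega)
    (isWaveWord_restrictBlocks hω hl hq.respects_fst.2 hq.respects_snd.2)
  have eM : M.encode = (ω.encode.drop i2).take (i3 - 1 - i2) := by
    rw [encode_restrictBlocks hl hq.respects_fst.2 hq.respects_snd.2]
    simp
  have hdrop : (ω.encode.drop i2).drop (i3 - 1 - i2) = ω.encode.drop (i3 - 1) := by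
    rw [List.drop_drop]
    congr 1
    omega
  have hout := genH_outer_of_isTwoWaveQuad ih hω hq
  have hW : GenW α ω.encode := by
    have := GenW.wrap hout hM.genW
    rwa [eM, ← hdrop, List.append_assoc, List.take_append_drop, List.take_append_drop] at this
  intro p hp
  have := hp 1 i2 h12
  have := hp i3 n h34
  rcases (by omega : p = 0 ∨ n ≤ p ∨ (i2 ≤ p ∧ p < i3)) with rfl | hpn | ⟨hp1, hp2⟩
  · simpa using hW.genH_right
  · rw [List.take_of_length_le (by simp; omega), List.drop_of_length_le (by simp; omega)]
    exact hW.genH_left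
  · have hMp := hM (p - i2) (isCut_restrictBlocks hp (by unfold blocks; split_ifs <;> omega)
      (by unfold blocks; split_ifs <;> omega))
    have := hout.comp hMp
    rwa [eM, List.take_take, min_eq_left (by omega), ← List.take_add, Nat.add_sub_cancel' hp1,
      ← hdrop, List.drop_take_append_drop_of_le _ (by omega), List.drop_drop,
      Nat.add_sub_cancel' hp1] at this

end Step

lemma IsWaveWord.genHAtCuts (hω : ω.IsWaveWord) : ω.GenHAtCuts := by
  induction h : ω.word.length using Nat.strong_induction_on generalizing ω with
  | _ n ih =>
  have ih' : ∀ ω' : TwoNW α, ω'.word.length < ω.word.length → ω'.IsWaveWord → ω'.GenHAtCuts :=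
    fun ω' hlt hω' => ih _ (h ▸ hlt) hω' rfl
  by_cases hsplit : ∃ q, 0 < q ∧ q < ω.word.length ∧ ω.M2.IsCut q
  · obtain ⟨q, hq0, hqn, hq⟩ := hsplit
    exact genHAtCuts_of_isCut_snd ih' hω hq0 hqn hq
  push Not at hsplit
  by_cases h1 : ω.M2.IsCall 1
  · obtain ⟨j, hj⟩ := h1
    obtain ⟨i2, i3, hq⟩ := exists_isTwoWaveQuad_one hω hj
    obtain rfl : j = ω.word.length := by
      have := ω.M2.ordered 1 j hj
      by_contra hne
      exact hsplit j (by omega) (by omega) (ω.M2.isCut_of_rel_one hj)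
    exact genHAtCuts_of_isTwoWaveQuad ih' hω hq
  · exact genHAtCuts_of_length_le_one (by
      by_contra hlt
      exact hsplit 1 one_pos (by omega) (ω.M2.isCut_one_of_not_isCall h1))

end TwoNW

/-- The language generated by the non-terminal `W` of the MCFG is
exactly the set of typed encodings of 2-wave words over `Σ`. -/
theorem genW_eq_encodings_of_wave_words (α : Type) [Finite α] :
    { u : List (Typed α) | GenW α u } =
    { u : List (Typed α) | ∃ ω : TwoNW α, ω.IsWaveWord ∧ ω.encode = u } := by
  ext u
  constructor
  · exact isWaveEncoding_of_genW
  · rintro ⟨ω, hω, rfl⟩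
    exact hω.genHAtCuts.genW
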